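/- Let N be a positive integer, V = {0,…,N−1}, U ∈ ℝ^{N×N} an orthogonal matrix, r ≤ N, F = {0,…,r−1}, and S ⊆ V with |S| ≥ r. Let g_0,…,g_{N−1} be positive real numbers such that g_i > g_j for every i ∈ F and every j ∉ F, and set T = U · diag(g_0,…,g_{N−1}) · Uᵀ. Assume the submatrix U_{S,F} has rank r. Then for every natural number k ≥ 1 the principal submatrix (T^k)_{S,S} is invertible, and for every vector f = U α with α_j = 0 for all j ∉ F, the reconstructions f̂_k := (T^k)_{V,S} · ((T^k)_{S,S})^{−1} · f_S converge to f as k → ∞. -/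

import Mathlib

open Matrix Finset Filter

/-- Submatrix of `M` with rows indexed by `A` and columns by `B`. -/
def subVV {N : ℕ} (M : Matrix (Fin N) (Fin N) ℝ) (A B : Finset (Fin N)) :
    Matrix {i // i ∈ A} {j // j ∈ B} ℝ := fun i j => M i.1 j.1

/-- Submatrix of `M` keeping all rows and columns indexed by `B`. -/
def subCols {N : ℕ} (M : Matrix (Fin N) (Fin N) ℝ) (B : Finset (Fin N)) :
    Matrix (Fin N) {j // j ∈ B} ℝ := fun i j => M i j.1

/-- Restriction of a vector to the indices in `A`. -/
def subVec {N : ℕ} (x : Fin N → ℝ) (A : Finset (Fin N)) : {i // i ∈ A} → ℝ := fun i => x i.1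

/-!
Let `V` be the rows of `U` indexed by `S` and `D_k = diag(g)^k`. Then
`T^k = U D_k Uᵀ` and `(T^k)_{S,S} = V D_k Vᵀ`, which is positive definite because `V` has
orthonormal rows. Moreover `f̂_k = U β_k`, where `β_k = D_k Vᵀ (V D_k Vᵀ)⁻¹ V α` is the solution of
`V β = V α` of least weighted norm `∑ i, β_i² / g_i^k`. Comparing with the competitor `α`, which is
supported on `F`, gives `β_{k,j}² ≤ ∑_{i ∈ F} α_i² (g_j / g_i)^k → 0` for `j ∉ F`. Since `U_{S,F}`
has full column rank, the constraint `V (β_k - α) = 0` then forces `β_k → α` on `F` as well.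
-/

namespace Matrix

variable {R K : Type*} [Semiring R] [Field K] {l m n : Type*} [Fintype n]

theorem mulVec_injective_of_rank_eq_card (A : Matrix m n K) (h : A.rank = Fintype.card n) :
    Function.Injective A.mulVec := by
  have hker := LinearMap.finrank_range_add_finrank_ker A.mulVecLin
  rw [← Matrix.rank, h, Module.finrank_fintype_fun_eq_card, add_eq_left,
    Submodule.finrank_eq_zero] at hker
  exact LinearMap.ker_eq_bot.mp hker

theorem vecMul_injective_of_mul_eq_one [Fintype m] [DecidableEq m] {A : Matrix m n R}
    {B : Matrix n m R} (h : A * B = 1) : Function.Injective A.vecMul := fun x y hxy => by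
  simpa [vecMul_vecMul, h] using congr_arg (· ᵥ* B) hxy

theorem pow_mul_mul_transpose [DecidableEq n] {U : Matrix n n R} (hU : U * Uᵀ = 1)
    (hU' : Uᵀ * U = 1) (A : Matrix n n R) (k : ℕ) : (U * A * Uᵀ) ^ k = U * A ^ k * Uᵀ := by
  induction k with
  | zero => simp [hU]
  | succ k ih =>
    rw [pow_succ, ih, pow_succ]
    simp only [Matrix.mul_assoc]
    rw [← Matrix.mul_assoc Uᵀ U, hU', Matrix.one_mul]

theorem submatrix_mul_mul_transpose {l' p q : Type*} (A : Matrix l n R) (D : Matrix n n R)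
    (B : Matrix l' n R) (r : p → l) (c : q → l') :
    (A * D * Bᵀ).submatrix r c = A.submatrix r id * D * (B.submatrix c id)ᵀ := by
  ext i j
  simp [Matrix.mul_apply]

end Matrix

section WeightedLeastNorm

variable {m n : Type*} [Fintype m] [Fintype n] [DecidableEq m] [DecidableEq n]

/-- The minimiser of `∑ i, z i ^ 2 / d i` subject to `V *ᵥ z = V *ᵥ x`. -/
noncomputable def weightedLeastNormSolution (V : Matrix m n ℝ) (d x : n → ℝ) : n → ℝ :=
  diagonal d *ᵥ (Vᵀ *ᵥ ((V * diagonal d * Vᵀ)⁻¹ *ᵥ (V *ᵥ x)))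

theorem isUnit_mul_diagonal_mul_transpose {V : Matrix m n ℝ} (hV : Function.Injective V.vecMul)
    {d : n → ℝ} (hd : ∀ i, 0 < d i) : IsUnit (V * diagonal d * Vᵀ) := by
  simpa using ((posDef_diagonal_iff.2 hd).mul_mul_conjTranspose_same hV).isUnit

variable {V : Matrix m n ℝ} {d : n → ℝ}

theorem mulVec_weightedLeastNormSolution (h : IsUnit (V * diagonal d * Vᵀ)) (x : n → ℝ) :
    V *ᵥ weightedLeastNormSolution V d x = V *ᵥ x := by
  simp only [weightedLeastNormSolution, mulVec_mulVec, ← Matrix.mul_assoc]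
  rw [mul_nonsing_inv _ ((isUnit_iff_isUnit_det _).1 h), Matrix.one_mul]

theorem sum_sq_div_weightedLeastNormSolution_le (hd : ∀ i, 0 < d i)
    (h : IsUnit (V * diagonal d * Vᵀ)) (x : n → ℝ) :
    ∑ i, weightedLeastNormSolution V d x i ^ 2 / d i ≤ ∑ i, x i ^ 2 / d i := by
  set z := weightedLeastNormSolution V d x
  set y := (V * diagonal d * Vᵀ)⁻¹ *ᵥ (V *ᵥ x)
  have hz : ∀ i, z i / d i = (Vᵀ *ᵥ y) i := fun i => by
    rw [show z = diagonal d *ᵥ (Vᵀ *ᵥ y) from rfl, mulVec_diagonal,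
      mul_div_cancel_left₀ _ (hd i).ne']
  -- `z - x` lies in the kernel of `V`, which is orthogonal to the range of `Vᵀ`.
  have horth : (z - x) ⬝ᵥ (Vᵀ *ᵥ y) = 0 := by
    rw [dotProduct_mulVec, vecMul_transpose, mulVec_sub, mulVec_weightedLeastNormSolution h,
      sub_self, zero_dotProduct]
  have hpyth : ∀ i, x i ^ 2 / d i - (z i - x i) ^ 2 / d i
      = z i ^ 2 / d i - 2 * ((z - x) i * (Vᵀ *ᵥ y) i) := fun i => by
    rw [← hz, Pi.sub_apply]
    field_simp
    ring
  calc ∑ i, z i ^ 2 / d i = ∑ i, x i ^ 2 / d i - ∑ i, (z i - x i) ^ 2 / d i := by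
        rw [← sum_sub_distrib, sum_congr rfl fun i _ => hpyth i, sum_sub_distrib, ← mul_sum,
          show ∑ i, (z - x) i * (Vᵀ *ᵥ y) i = 0 from horth, mul_zero, sub_zero]
    _ ≤ ∑ i, x i ^ 2 / d i :=
        sub_le_self _ (sum_nonneg fun i _ => div_nonneg (sq_nonneg _) (hd i).le)

end WeightedLeastNorm

section Convergence

variable {m n : Type*} [Fintype n] {g α : n → ℝ} {F : Finset n} {β : ℕ → n → ℝ}

theorem tendsto_apply_zero_of_sum_sq_div_pow_le (hg : ∀ i, 0 < g i)
    (hgF : ∀ i ∈ F, ∀ j ∉ F, g j < g i) (hα : ∀ j ∉ F, α j = 0)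
    (hβ : ∀ k, ∑ i, β k i ^ 2 / g i ^ k ≤ ∑ i, α i ^ 2 / g i ^ k) {j : n} (hj : j ∉ F) :
    Tendsto (fun k => β k j) atTop (nhds 0) := by
  have hbound : ∀ k, β k j ^ 2 ≤ ∑ i ∈ F, α i ^ 2 * (g j / g i) ^ k := fun k => by
    have h : β k j ^ 2 / g j ^ k ≤ ∑ i ∈ F, α i ^ 2 / g i ^ k :=
      calc β k j ^ 2 / g j ^ k ≤ ∑ i, β k i ^ 2 / g i ^ k :=
            single_le_sum (fun i _ => div_nonneg (sq_nonneg _) (pow_pos (hg i) k).le) (mem_univ j)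
        _ ≤ ∑ i, α i ^ 2 / g i ^ k := hβ k
        _ = ∑ i ∈ F, α i ^ 2 / g i ^ k :=
            (sum_subset (subset_univ F) fun i _ hi => by simp [hα i hi]).symm
    rw [div_le_iff₀ (pow_pos (hg j) k), sum_mul] at h
    refine h.trans_eq (sum_congr rfl fun i _ => ?_)
    have := (hg i).ne'
    rw [div_pow]
    field_simp
  have hlim : Tendsto (fun k => ∑ i ∈ F, α i ^ 2 * (g j / g i) ^ k) atTop (nhds 0) := by
    simpa using tendsto_finsetSum F fun i hi =>
      (tendsto_pow_atTop_nhds_zero_of_lt_one (div_nonneg (hg j).le (hg i).le)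
        ((div_lt_one (hg i)).2 (hgF i hi j hj))).const_mul (α i ^ 2)
  have hsq := squeeze_zero (fun k => sq_nonneg _) hbound hlim
  rw [tendsto_zero_iff_abs_tendsto_zero]
  simpa [Function.comp_def, Real.sqrt_sq_eq_abs] using hsq.sqrt

theorem tendsto_of_mulVec_eq_of_sum_sq_div_pow_le {V : Matrix m n ℝ}
    (hV : ∀ x, V *ᵥ x = 0 → (∀ j ∉ F, x j = 0) → x = 0) (hg : ∀ i, 0 < g i)
    (hgF : ∀ i ∈ F, ∀ j ∉ F, g j < g i) (hα : ∀ j ∉ F, α j = 0)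
    (hVβ : ∀ k, V *ᵥ β k = V *ᵥ α)
    (hβ : ∀ k, ∑ i, β k i ^ 2 / g i ^ k ≤ ∑ i, α i ^ 2 / g i ^ k) :
    Tendsto β atTop (nhds α) := by
  -- `x ↦ (V *ᵥ x, x off F)` is injective, and `β k` converges to `α` after applying it.
  let φ : (n → ℝ) →ₗ[ℝ] (m → ℝ) × ({j // j ∉ F} → ℝ) :=
    V.mulVecLin.prod (LinearMap.funLeft ℝ ℝ Subtype.val)
  have hφ : LinearMap.ker φ = ⊥ := LinearMap.ker_eq_bot'.2 fun x hx =>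
    hV x congr($hx.1) fun j hj => congr_fun congr($hx.2) ⟨j, hj⟩
  rw [(φ.isClosedEmbedding_of_injective hφ).tendsto_nhds_iff]
  refine Tendsto.prodMk_nhds ?_ (tendsto_pi_nhds.2 fun j => ?_)
  · simp [hVβ]
  · simpa [φ, Function.comp_def, LinearMap.funLeft, hα j j.2] using
      tendsto_apply_zero_of_sum_sq_div_pow_le hg hgF hα hβ j.2

end Convergence

section Submatrices

variable {N : ℕ}

def subRows (M : Matrix (Fin N) (Fin N) ℝ) (A : Finset (Fin N)) : Matrix {i // i ∈ A} (Fin N) ℝ :=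
  M.submatrix Subtype.val id

theorem subVec_mulVec (M : Matrix (Fin N) (Fin N) ℝ) (A : Finset (Fin N)) (x : Fin N → ℝ) :
    subVec (M *ᵥ x) A = subRows M A *ᵥ x :=
  rfl

theorem subVV_mulVec_subVec (M : Matrix (Fin N) (Fin N) ℝ) (A B : Finset (Fin N))
    {x : Fin N → ℝ} (hx : ∀ j ∉ B, x j = 0) : subVV M A B *ᵥ subVec x B = subVec (M *ᵥ x) A := by
  ext i
  simp only [subVV, subVec, mulVec, dotProduct]
  rw [sum_coe_sort B fun j => M i j * x j]
  exact sum_subset (subset_univ B) fun j _ hj => by simp [hx j hj]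

theorem eq_zero_of_subRows_mulVec_eq_zero {U : Matrix (Fin N) (Fin N) ℝ} {S F : Finset (Fin N)}
    (hUSF : Function.Injective (subVV U S F).mulVec) {x : Fin N → ℝ}
    (hx : subRows U S *ᵥ x = 0) (hxF : ∀ j ∉ F, x j = 0) : x = 0 := by
  have h : subVV U S F *ᵥ subVec x F = subVV U S F *ᵥ 0 := by
    rw [subVV_mulVec_subVec U S F hxF, subVec_mulVec, hx, mulVec_zero]
  ext j
  by_cases hj : j ∈ F
  · exact congr_fun (hUSF h) ⟨j, hj⟩
  · exact hxF j hj

theorem subRows_mul_transpose_subRows {U : Matrix (Fin N) (Fin N) ℝ} (hU : U * Uᵀ = 1)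
    (S : Finset (Fin N)) : subRows U S * (subRows U S)ᵀ = 1 := by
  rw [subRows, transpose_submatrix, ← submatrix_mul _ _ _ _ _ Function.bijective_id, hU,
    submatrix_one _ Subtype.val_injective]

variable (U : Matrix (Fin N) (Fin N) ℝ) (S : Finset (Fin N)) (d : Fin N → ℝ)

theorem subVV_mul_diagonal_mul_transpose :
    subVV (U * diagonal d * Uᵀ) S S = subRows U S * diagonal d * (subRows U S)ᵀ :=
  submatrix_mul_mul_transpose U _ U _ _

theorem subCols_mul_diagonal_mul_transpose :
    subCols (U * diagonal d * Uᵀ) S = U * diagonal d * (subRows U S)ᵀ := by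
  show (U * diagonal d * Uᵀ).submatrix id Subtype.val = _
  rw [← submatrix_id_id U]
  exact submatrix_mul_mul_transpose _ _ _ id Subtype.val

theorem subCols_mulVec_inv_subVV_mulVec_subVec (x : Fin N → ℝ) :
    subCols (U * diagonal d * Uᵀ) S *ᵥ
        ((subVV (U * diagonal d * Uᵀ) S S)⁻¹ *ᵥ subVec (U *ᵥ x) S)
      = U *ᵥ weightedLeastNormSolution (subRows U S) d x := by
  rw [subCols_mul_diagonal_mul_transpose, subVV_mul_diagonal_mul_transpose,
    weightedLeastNormSolution, subVec_mulVec]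
  simp only [mulVec_mulVec, Matrix.mul_assoc]

end Submatrices

theorem stmt0_general (N r : ℕ)
    (U : Matrix (Fin N) (Fin N) ℝ) (hU : U * Uᵀ = 1) (hU' : Uᵀ * U = 1)
    (F : Finset (Fin N)) (hF : ∀ i : Fin N, i ∈ F ↔ (i : ℕ) < r)
    (S : Finset (Fin N))
    (g : Fin N → ℝ) (hgpos : ∀ i, 0 < g i)
    (hgF : ∀ i ∈ F, ∀ j ∉ F, g j < g i)
    (T : Matrix (Fin N) (Fin N) ℝ) (hT : T = U * Matrix.diagonal g * Uᵀ)
    (hrank : (subVV U S F).rank = r) :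
    (∀ k : ℕ, 1 ≤ k → IsUnit (subVV (T ^ k) S S)) ∧
    ∀ α : Fin N → ℝ, (∀ j ∉ F, α j = 0) →
      Filter.Tendsto
        (fun k : ℕ =>
          (subCols (T ^ k) S).mulVec
            ((subVV (T ^ k) S S)⁻¹.mulVec (subVec (U.mulVec α) S)))
        atTop (nhds (U.mulVec α)) := by
  set V := subRows U S
  have hTk : ∀ k, T ^ k = U * diagonal (g ^ k) * Uᵀ := fun k => by
    rw [hT, pow_mul_mul_transpose hU hU', diagonal_pow]
  have hunit : ∀ k, IsUnit (V * diagonal (g ^ k) * Vᵀ) := fun k =>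
    isUnit_mul_diagonal_mul_transpose
      (vecMul_injective_of_mul_eq_one (subRows_mul_transpose_subRows hU S))
      fun i => pow_pos (hgpos i) k
  refine ⟨fun k _ => by rw [hTk, subVV_mul_diagonal_mul_transpose]; exact hunit k, fun α hα => ?_⟩
  have hcard : (subVV U S F).rank = Fintype.card {j // j ∈ F} := by
    refine le_antisymm (rank_le_card_width _) ?_
    rw [hrank, Fintype.card_coe]
    simpa using card_le_card_of_injOn Fin.val (fun i hi => mem_range.2 ((hF i).1 hi))
      Fin.val_injective.injOn
  have hβ := tendsto_of_mulVec_eq_of_sum_sq_div_pow_le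
    (fun x hx => eq_zero_of_subRows_mulVec_eq_zero (mulVec_injective_of_rank_eq_card _ hcard) hx)
    hgpos hgF hα
    (fun k => mulVec_weightedLeastNormSolution (hunit k) α)
    fun k => by
      simpa only [Pi.pow_apply] using sum_sq_div_weightedLeastNormSolution_le (d := g ^ k)
        (fun i => pow_pos (hgpos i) k) (hunit k) α
  simp_rw [hTk, subCols_mulVec_inv_subVV_mulVec_subVec]
  exact ((continuous_const.matrix_mulVec continuous_id).tendsto α).comp hβ

/-- Theorem 1 of the paper: for the localization operator `T = U diag(g) Uᵀ` with a kernel that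
is strictly larger on the passband `F = {0, …, r-1}` than outside it, the principal submatrices
`(T^k)_{S,S}` are invertible and the reconstructions
`f̂_k = (T^k)_{V,S} ((T^k)_{S,S})⁻¹ f_S` of an `F`-bandlimited signal `f = U α` converge to `f`. -/
theorem stmt0 (N r : ℕ) (hN : 0 < N) (hr : r ≤ N)
    (U : Matrix (Fin N) (Fin N) ℝ) (hU : U * Uᵀ = 1) (hU' : Uᵀ * U = 1)
    (F : Finset (Fin N)) (hF : ∀ i : Fin N, i ∈ F ↔ (i : ℕ) < r)
    (S : Finset (Fin N)) (hS : r ≤ S.card)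
    (g : Fin N → ℝ) (hgpos : ∀ i, 0 < g i)
    (hgF : ∀ i ∈ F, ∀ j ∉ F, g j < g i)
    (T : Matrix (Fin N) (Fin N) ℝ) (hT : T = U * Matrix.diagonal g * Uᵀ)
    (hrank : (subVV U S F).rank = r) :
    (∀ k : ℕ, 1 ≤ k → IsUnit (subVV (T ^ k) S S)) ∧
    ∀ α : Fin N → ℝ, (∀ j ∉ F, α j = 0) →
      Filter.Tendsto
        (fun k : ℕ =>
          (subCols (T ^ k) S).mulVec
            ((subVV (T ^ k) S S)⁻¹.mulVec (subVec (U.mulVec α) S)))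
        atTop (nhds (U.mulVec α)) :=
  stmt0_general N r U hU hU' F hF S g hgpos hgF T hT hrank
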